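/- For all positive integers n and m, c_{n,m} ⪯ c_{n+1,m} and c_{n,m} ⪯ c_{n,m+1}. -/

import Mathlib

open Classical

/-- A slope is an element of `ℚ ∪ {∞}`; `none` denotes `∞`. -/
abbrev Slope := Option ℚ

/-- The clue of `f` along the line of slope `s` (vertical line `x = c` when `s = ∞ = none`,
and the line `y = r·x + c` when `s = some r`), with respect to the grid
`I_{n,m} = {1,…,n} × {1,…,m} ⊆ ℤ²`: the sum of `f` over the grid points lying on the line. -/
noncomputable def clueSum (n m : ℕ) (s : Slope) (c : ℝ) (f : ℤ × ℤ → ℝ) : ℝ :=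
  ∑ p ∈ (Finset.Icc (1 : ℤ) n ×ˢ Finset.Icc (1 : ℤ) m).filter
      (fun p => match s with
        | none => (p.1 : ℝ) = c
        | some r => (p.2 : ℝ) = (r : ℝ) * (p.1 : ℝ) + c),
    f p

/-- `f` and `g` are `T`-clue-equivalent on `I_{n,m}`: for every slope `s ∈ T` and every line
of slope `s`, the clues of `f` and `g` along that line agree. -/
def ClueEquiv (n m : ℕ) (T : Set Slope) (f g : ℤ × ℤ → ℝ) : Prop :=
  ∀ s ∈ T, ∀ c : ℝ, clueSum n m s c f = clueSum n m s c g

/-- The entry `p ∈ I_{n,m}` is uniquely solvable with respect to the slope set `T`. -/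
def UniqSolv (n m : ℕ) (T : Set Slope) (p : ℤ × ℤ) : Prop :=
  ∀ f g : ℤ × ℤ → ℝ, ClueEquiv n m T f g → f p = g p

/-- The enumeration `σ` of the slope set `S = ℤ ∪ {1/k : k ≠ 0} ∪ {∞}` realizing the order
`0 ≺ ∞ ≺ −1 ≺ 1 ≺ −1/2 ≺ −2 ≺ 1/2 ≺ 2 ≺ −1/3 ≺ −3 ≺ 1/3 ≺ 3 ≺ ⋯`:
`σ 0 = 0`, `σ 1 = ∞`, `σ 2 = −1`, `σ 3 = 1`, and for `q ≥ 2`,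
`σ (4q−4) = −1/q`, `σ (4q−3) = −q`, `σ (4q−2) = 1/q`, `σ (4q−1) = q`. -/
def sigmaSlope : ℕ → Slope
  | 0 => some 0
  | 1 => none
  | 2 => some (-1)
  | 3 => some 1
  | (a + 4) =>
    let q : ℚ := ((a / 4 + 2 : ℕ) : ℚ)
    match a % 4 with
    | 0 => some (-(1 / q))
    | 1 => some (-q)
    | 2 => some (1 / q)
    | _ => some q

/-- `C_{σ(a)} = {t ∈ S : t ⪯ σ(a)}`, the set of the first `a + 1` slopes. -/
def CSet (a : ℕ) : Set Slope := sigmaSlope '' Set.Iic a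

/-- Either every entry of the first row or every entry of the last row of `I_{n,m}` is
uniquely solvable with respect to `C_{σ(a)}`. -/
def RowOK (n m a : ℕ) : Prop :=
  (∀ i : ℤ, 1 ≤ i → i ≤ (n : ℤ) → UniqSolv n m (CSet a) (i, 1)) ∨
  (∀ i : ℤ, 1 ≤ i → i ≤ (n : ℤ) → UniqSolv n m (CSet a) (i, (m : ℤ)))

/-- Either every entry of the first column or every entry of the last column of `I_{n,m}` is
uniquely solvable with respect to `C_{σ(a)}`. -/
def ColOK (n m a : ℕ) : Prop :=
  (∀ j : ℤ, 1 ≤ j → j ≤ (m : ℤ) → UniqSolv n m (CSet a) (1, j)) ∨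
  (∀ j : ℤ, 1 ≤ j → j ≤ (m : ℤ) → UniqSolv n m (CSet a) ((n : ℤ), j))

/-- The index (in the enumeration `σ`) of the invariant `r_{n,m}`: the ⪯-least `s ∈ S` such
that either the first or the last row of `I_{n,m}` is uniquely solvable w.r.t. `C_s`. -/
noncomputable def rInv (n m : ℕ) : ℕ := sInf {a | RowOK n m a}

/-- The index of the invariant `c_{n,m}`: the ⪯-least `s ∈ S` such that either the first or
the last column of `I_{n,m}` is uniquely solvable w.r.t. `C_s`. -/
noncomputable def cInv (n m : ℕ) : ℕ := sInf {a | ColOK n m a}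

/-- The index of the invariant `s_{n,m} = min{r_{n,m}, c_{n,m}}`. -/
noncomputable def sInv (n m : ℕ) : ℕ := min (rInv n m) (cInv n m)

/-- The index of the invariant `k_{n,m}`: the ⪯-least `s ∈ S` such that every entry of
`I_{n,m}` is uniquely solvable w.r.t. `C_s`. -/
noncomputable def kInv (n m : ℕ) : ℕ :=
  sInf {a | ∀ p : ℤ × ℤ, 1 ≤ p.1 → p.1 ≤ (n : ℤ) → 1 ≤ p.2 → p.2 ≤ (m : ℤ) →
    UniqSolv n m (CSet a) p}

/-- The index of the invariant `b_{n,m}`: the ⪯-least `s ∈ S` such that every entry of the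
border `B_{n,m} = ({1,n} × I_m) ∪ (I_n × {1,m})` is uniquely solvable w.r.t. `C_s`. -/
noncomputable def bInv (n m : ℕ) : ℕ :=
  sInf {a | ∀ p : ℤ × ℤ, 1 ≤ p.1 → p.1 ≤ (n : ℤ) → 1 ≤ p.2 → p.2 ≤ (m : ℤ) →
    (p.1 = 1 ∨ p.1 = (n : ℤ) ∨ p.2 = 1 ∨ p.2 = (m : ℤ)) →
    UniqSolv n m (CSet a) p}

/-!
Translating `I_{n,m}` into a larger grid `I_{N,M}` and extending by zero maps clue-equivalent
functions to clue-equivalent functions, because the translate of a line of slope `s` is again a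
line of slope `s`. Hence an entry of `I_{N,M}` that is uniquely solvable stays so at its preimage.
The first column of `I_{n,m}` sits inside the first column of `I_{N,M}`, and its last column,
translated by `(N - n, 0)`, inside the last one; so every index that works for `I_{N,M}` works for
`I_{n,m}`. Some index does work, since a line steeper than `M - 1` meets `I_{N,M}` in at most one
point.
-/

noncomputable def grid (n m : ℕ) : Finset (ℤ × ℤ) := Finset.Icc (1 : ℤ) n ×ˢ Finset.Icc (1 : ℤ) m

def onLine : Slope → ℝ → ℤ × ℤ → Prop
  | none, c, p => (p.1 : ℝ) = c
  | some r, c, p => (p.2 : ℝ) = (r : ℝ) * (p.1 : ℝ) + c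

lemma mem_grid {n m : ℕ} {p : ℤ × ℤ} :
    p ∈ grid n m ↔ 1 ≤ p.1 ∧ p.1 ≤ n ∧ 1 ≤ p.2 ∧ p.2 ≤ m := by
  simp only [grid, Finset.mem_product, Finset.mem_Icc, and_assoc]

lemma clueSum_eq_sum_grid (n m : ℕ) (s : Slope) (c : ℝ) (f : ℤ × ℤ → ℝ) :
    clueSum n m s c f = ∑ p ∈ (grid n m).filter (onLine s c), f p := by
  cases s <;> rfl

/-- The intercept of the translate `ℓ - t` of the line `ℓ` of slope `s` and intercept `c`. -/
def shiftIntercept : Slope → ℝ → ℤ × ℤ → ℝ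
  | none, c, t => c - t.1
  | some r, c, t => c + r * t.1 - t.2

lemma onLine_add_iff (s : Slope) (c : ℝ) (p t : ℤ × ℤ) :
    onLine s c (p + t) ↔ onLine s (shiftIntercept s c t) p := by
  cases s <;>
  · simp only [onLine, shiftIntercept, Prod.fst_add, Prod.snd_add, Int.cast_add]
    constructor <;> intro h <;> linarith

noncomputable def shiftExtend (n m : ℕ) (t : ℤ × ℤ) (f : ℤ × ℤ → ℝ) : ℤ × ℤ → ℝ :=
  fun p => if p - t ∈ grid n m then f (p - t) else 0

section Translate

variable {n m N M : ℕ} {t : ℤ × ℤ}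

lemma clueSum_shiftExtend (hsub : ∀ p ∈ grid n m, p + t ∈ grid N M) (s : Slope) (c : ℝ)
    (f : ℤ × ℤ → ℝ) :
    clueSum N M s c (shiftExtend n m t f) = clueSum n m s (shiftIntercept s c t) f := by
  rw [clueSum_eq_sum_grid, clueSum_eq_sum_grid]
  set small := (grid n m).filter (onLine s (shiftIntercept s c t))
  have hmap : small.map (addRightEmbedding t) ⊆ (grid N M).filter (onLine s c) := by
    intro q hq
    obtain ⟨p, hp, rfl⟩ := Finset.mem_map.1 hq
    obtain ⟨hp, hline⟩ := Finset.mem_filter.1 hp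
    exact Finset.mem_filter.2 ⟨hsub p hp, (onLine_add_iff s c p t).2 hline⟩
  have hzero : ∀ q ∈ (grid N M).filter (onLine s c), q ∉ small.map (addRightEmbedding t) →
      shiftExtend n m t f q = 0 := by
    intro q hq hnot
    refine if_neg fun hgrid => hnot (Finset.mem_map.2 ⟨q - t, ?_, sub_add_cancel q t⟩)
    have hline : onLine s c (q - t + t) := by rw [sub_add_cancel]; exact (Finset.mem_filter.1 hq).2
    exact Finset.mem_filter.2 ⟨hgrid, (onLine_add_iff s c _ t).1 hline⟩
  calc ∑ q ∈ (grid N M).filter (onLine s c), shiftExtend n m t f q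
      = ∑ q ∈ small.map (addRightEmbedding t), shiftExtend n m t f q :=
        (Finset.sum_subset hmap hzero).symm
    _ = ∑ p ∈ small, shiftExtend n m t f (p + t) := Finset.sum_map _ _ _
    _ = ∑ p ∈ small, f p := Finset.sum_congr rfl fun p hp => by
        simp [shiftExtend, (Finset.mem_filter.1 hp).1]

lemma ClueEquiv.shiftExtend (hsub : ∀ p ∈ grid n m, p + t ∈ grid N M) {T : Set Slope}
    {f g : ℤ × ℤ → ℝ} (h : ClueEquiv n m T f g) :
    ClueEquiv N M T (shiftExtend n m t f) (shiftExtend n m t g) := fun s hs c => by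
  rw [clueSum_shiftExtend hsub, clueSum_shiftExtend hsub]
  exact h s hs _

lemma UniqSolv.of_add (hsub : ∀ p ∈ grid n m, p + t ∈ grid N M) {T : Set Slope}
    {p : ℤ × ℤ} (hp : p ∈ grid n m) (h : UniqSolv N M T (p + t)) : UniqSolv n m T p := by
  intro f g hfg
  simpa [_root_.shiftExtend, hp] using h _ _ (hfg.shiftExtend hsub)

end Translate

lemma ColOK.mono {n m N M a : ℕ} (hn : 0 < n) (hnN : n ≤ N) (hmM : m ≤ M)
    (h : ColOK N M a) : ColOK n m a := by
  refine h.imp (fun h j hj₁ hj₂ => ?_) (fun h j hj₁ hj₂ => ?_)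
  · refine UniqSolv.of_add (t := 0) (fun p hp => ?_) ?_ (by simpa using h j hj₁ (by omega))
    · simp only [mem_grid, add_zero] at hp ⊢; omega
    · rw [mem_grid]; omega
  · refine UniqSolv.of_add (t := ((N : ℤ) - n, 0)) (fun p hp => ?_) ?_
      (by simpa using h j hj₁ (by omega))
    · simp only [mem_grid, Prod.fst_add, Prod.snd_add] at hp ⊢; omega
    · rw [mem_grid]; omega

lemma filter_onLine_steep {n m : ℕ} {r : ℚ} (hr : (m : ℚ) - 1 < |r|) {p : ℤ × ℤ}
    (hp : p ∈ grid n m) : (grid n m).filter (onLine (some r) (p.2 - r * p.1)) = {p} := by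
  ext q
  simp only [Finset.mem_filter, Finset.mem_singleton, onLine]
  constructor
  · rintro ⟨hq, hline⟩
    have hr' : (m : ℝ) - 1 < |(r : ℝ)| := by exact_mod_cast hr
    rw [mem_grid] at hp hq
    have hx : q.1 = p.1 := by
      by_contra hne
      have h₁ : (1 : ℝ) ≤ |(q.1 : ℝ) - p.1| := by
        exact_mod_cast Int.one_le_abs (sub_ne_zero.2 hne)
      have h₂ : |(q.2 : ℝ) - p.2| ≤ m - 1 := by
        have h : |q.2 - p.2| ≤ (m : ℤ) - 1 := abs_sub_le_iff.2 ⟨by omega, by omega⟩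
        exact_mod_cast h
      have h₃ : |(q.2 : ℝ) - p.2| = |(r : ℝ)| * |(q.1 : ℝ) - p.1| := by
        rw [← abs_mul, hline]; ring_nf
      nlinarith [abs_nonneg (r : ℝ)]
    refine Prod.ext hx ?_
    rw [hx] at hline
    exact_mod_cast (show (q.2 : ℝ) = p.2 by linarith)
  · rintro rfl
    exact ⟨hp, by ring⟩

lemma uniqSolv_of_steep {n m : ℕ} {T : Set Slope} {r : ℚ} (hT : some r ∈ T)
    (hr : (m : ℚ) - 1 < |r|) {p : ℤ × ℤ} (hp : p ∈ grid n m) : UniqSolv n m T p := by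
  intro f g hfg
  have hclue := hfg _ hT (p.2 - r * p.1)
  rwa [clueSum_eq_sum_grid, clueSum_eq_sum_grid, filter_onLine_steep hr hp,
    Finset.sum_singleton, Finset.sum_singleton] at hclue

lemma sigmaSlope_four_mul_add_seven (k : ℕ) : sigmaSlope (4 * k + 7) = some ((k : ℚ) + 2) := by
  rw [show 4 * k + 7 = (4 * k + 3) + 4 by ring]
  simp only [sigmaSlope, show (4 * k + 3) % 4 = 3 by omega, show (4 * k + 3) / 4 = k by omega]
  push_cast
  rfl

lemma sigmaSlope_mem_cSet (a : ℕ) : sigmaSlope a ∈ CSet a :=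
  Set.mem_image_of_mem _ (Set.mem_Iic.2 le_rfl)

lemma colOK_four_mul_add_seven {n : ℕ} (hn : 0 < n) (m : ℕ) : ColOK n m (4 * m + 7) := by
  refine Or.inl fun j hj₁ hj₂ => uniqSolv_of_steep (r := m + 2) ?_ ?_ ?_
  · rw [← sigmaSlope_four_mul_add_seven]; exact sigmaSlope_mem_cSet _
  · rw [abs_of_pos (by positivity)]; linarith
  · rw [mem_grid]; omega

lemma cInv_le_cInv {n m N M : ℕ} (hn : 0 < n) (hnN : n ≤ N) (hmM : m ≤ M) :
    cInv n m ≤ cInv N M :=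
  Nat.sInf_le <| ColOK.mono hn hnN hmM <|
    Nat.sInf_mem (s := {a | ColOK N M a}) ⟨_, colOK_four_mul_add_seven (hn.trans_le hnN) M⟩

theorem cInv_mono_general (n m : ℕ) (hn : 0 < n) :
    cInv n m ≤ cInv (n + 1) m ∧ cInv n m ≤ cInv n (m + 1) :=
  ⟨cInv_le_cInv hn n.le_succ le_rfl, cInv_le_cInv hn le_rfl m.le_succ⟩

/-- `c_{n,m} ⪯ c_{n+1,m}` and `c_{n,m} ⪯ c_{n,m+1}` (comparison in the order
`⪯` is comparison of indices in the enumeration `σ`). -/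
theorem cInv_mono (n m : ℕ) (hn : 0 < n) (hm : 0 < m) :
    cInv n m ≤ cInv (n + 1) m ∧ cInv n m ≤ cInv n (m + 1) :=
  cInv_mono_general n m hn
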